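/- For every positive natural number n and every integer m, m is regular modulo n if and only if gcd(m^2, n) = gcd(m, n). -/

import Mathlib

/-- An integer `m` is regular modulo `n` if `m^2 * x ≡ m (mod n)` for some integer `x`. -/
def IsRegularMod (n : ℕ) (m : ℤ) : Prop := ∃ x : ℤ, m ^ 2 * x ≡ m [ZMOD (n : ℤ)]

theorem Int.exists_mul_modEq_iff_gcd_dvd (a b n : ℤ) :
    (∃ x, a * x ≡ b [ZMOD n]) ↔ (a.gcd n : ℤ) ∣ b := by
  rw [Int.coe_gcd, gcd_dvd_iff_exists]
  refine exists_congr fun x => ?_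
  rw [Int.modEq_iff_dvd, dvd_iff_exists_eq_mul_left]
  refine exists_congr fun y => ?_
  constructor <;> intro h <;> linear_combination h

theorem Int.gcd_eq_gcd_iff_dvd_of_dvd {m a n : ℤ} (hma : m ∣ a) :
    a.gcd n = m.gcd n ↔ (a.gcd n : ℤ) ∣ m := by
  refine ⟨fun h => h ▸ Int.gcd_dvd_left m n, fun h => Nat.dvd_antisymm ?_ ?_⟩
  · exact Int.natCast_dvd_natCast.mp (Int.dvd_coe_gcd h (Int.gcd_dvd_right a n))
  · exact Int.gcd_dvd_gcd_of_dvd_left n hma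

theorem isRegularMod_iff_gcd_sq_eq_gcd_general (n : ℕ) (m : ℤ) :
    IsRegularMod n m ↔ Int.gcd (m ^ 2) (n : ℤ) = Int.gcd m (n : ℤ) :=
  (Int.exists_mul_modEq_iff_gcd_dvd _ _ _).trans
    (Int.gcd_eq_gcd_iff_dvd_of_dvd (dvd_pow_self m two_ne_zero)).symm

theorem isRegularMod_iff_gcd_sq_eq_gcd (n : ℕ) (hn : 0 < n) (m : ℤ) :
    IsRegularMod n m ↔ Int.gcd (m ^ 2) (n : ℤ) = Int.gcd m (n : ℤ) :=
  isRegularMod_iff_gcd_sq_eq_gcd_general n m
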